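/- arXiv:1402.7311 — 8 statements merged into one kernel-verified Lean document; each statement's English description precedes it below -/
import Mathlib

section
/- Let (A_i)_{i∈I} be a POVM on a finite-dimensional complex Hilbert space H (a finite family of positive semidefinite operators with Σ_i A_i = I), measured via the Lüders channel Φ_L(ρ) = Σ_i A_i^{1/2} ρ A_i^{1/2}, where A_i^{1/2} is the positive square root of A_i. For a unit vector ψ, Σ_i A_i^{1/2} |ψ⟩⟨ψ| A_i^{1/2} = |ψ⟩⟨ψ| if and only if ψ is a common eigenvector of all the operators A_i, i.e. for every i there exists a scalar λ_i with A_i ψ = λ_i ψ. -/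
/-!
The channel sends `|ψ⟩⟨ψ|` to `∑ i, |wᵢ⟩⟨wᵢ|` with `wᵢ = √Aᵢ ψ`. If this equals `|ψ⟩⟨ψ|`, then
every `x ⊥ ψ` satisfies `∑ i, |⟨wᵢ, x⟩|² = 0`, so each `wᵢ` lies on the line through `ψ`, and `ψ`
is an eigenvector of `Aᵢ = √Aᵢ √Aᵢ`. Conversely, functional calculus acts on an eigenvector by
evaluation, so an eigenvector of `Aᵢ` for `λᵢ` is one of `√Aᵢ` for `√λᵢ`; the channel then returns
`(∑ i, λᵢ) |ψ⟩⟨ψ|`, and `∑ i, λᵢ = ⟨ψ, (∑ i, Aᵢ) ψ⟩ = 1`.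
-/

open Matrix
open scoped ComplexOrder

noncomputable def Matrix.PosSemidef.sqrt {n : Type*} [Fintype n] [DecidableEq n]
    {𝕜 : Type*} [RCLike 𝕜] {A : Matrix n n 𝕜} (hA : A.PosSemidef) : Matrix n n 𝕜 :=
  (hA.1.eigenvectorUnitary : Matrix n n 𝕜) * diagonal (((↑) : ℝ → 𝕜) ∘ (√·) ∘ hA.1.eigenvalues) *
    (star hA.1.eigenvectorUnitary : Matrix n n 𝕜)

namespace Matrix

variable {n 𝕜 : Type*} [Fintype n] [RCLike 𝕜]

lemma IsHermitian.mul_vecMulVec_star_mul_self {B : Matrix n n 𝕜} (hB : B.IsHermitian)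
    (ψ : n → 𝕜) : B * vecMulVec ψ (star ψ) * B = vecMulVec (B *ᵥ ψ) (star (B *ᵥ ψ)) := by
  rw [mul_vecMulVec, vecMulVec_mul, star_mulVec, hB.eq]

lemma sum_star_mulVec_dotProduct_mulVec [DecidableEq n] {ι : Type*} [Fintype ι]
    {K : ι → Matrix n n 𝕜} (hK : ∑ i, (K i)ᴴ * K i = 1) (ψ : n → 𝕜) :
    ∑ i, star (K i *ᵥ ψ) ⬝ᵥ (K i *ᵥ ψ) = star ψ ⬝ᵥ ψ := by
  simp_rw [star_mulVec, ← dotProduct_mulVec, mulVec_mulVec, ← dotProduct_sum, ← sum_mulVec, hK,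
    one_mulVec]

lemma star_dotProduct_eq_zero_of_sum_vecMulVec_eq {ι : Type*} [Fintype ι] {w : ι → n → 𝕜}
    {ψ x : n → 𝕜} (h : ∑ i, vecMulVec (w i) (star (w i)) = vecMulVec ψ (star ψ))
    (hx : star ψ ⬝ᵥ x = 0) (i : ι) : star (w i) ⬝ᵥ x = 0 := by
  have hquad (u : n → 𝕜) :
      star x ⬝ᵥ (vecMulVec u (star u) *ᵥ x) = star (star u ⬝ᵥ x) * (star u ⬝ᵥ x) := by
    rw [vecMulVec_mulVec, op_smul_eq_smul, dotProduct_smul, smul_eq_mul, star_dotProduct x u,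
      mul_comm]
  have := congrArg (fun M => star x ⬝ᵥ (M *ᵥ x)) h
  simp only [sum_mulVec, dotProduct_sum, hquad, hx, mul_zero] at this
  exact congrFun (dotProduct_star_self_eq_zero.mp this) i

lemma exists_smul_eq_of_forall_star_dotProduct_eq_zero [DecidableEq n] {ψ w : n → 𝕜}
    (h : ∀ x, star ψ ⬝ᵥ x = 0 → star w ⬝ᵥ x = 0) : ∃ c : 𝕜, w = c • ψ := by
  set c := (star ψ ⬝ᵥ w) / (star ψ ⬝ᵥ ψ)
  have hx : star ψ ⬝ᵥ (w - c • ψ) = 0 := by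
    rcases eq_or_ne ψ 0 with rfl | hψ
    · simp
    · have : star ψ ⬝ᵥ ψ ≠ 0 := dotProduct_star_self_eq_zero.not.mpr hψ
      rw [dotProduct_sub, dotProduct_smul, smul_eq_mul, div_mul_cancel₀ _ this, sub_self]
  refine ⟨c, sub_eq_zero.mp (dotProduct_star_self_eq_zero.mp ?_)⟩
  rw [star_sub, sub_dotProduct, h _ hx, star_smul, smul_dotProduct, hx, smul_zero, sub_zero]

lemma IsHermitian.cfc_mulVec_eq_smul [DecidableEq n] {A : Matrix n n 𝕜} (hA : A.IsHermitian)
    (f : ℝ → ℝ) {ψ : n → 𝕜} {μ : 𝕜} (h : A *ᵥ ψ = μ • ψ) :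
    cfc f A *ᵥ ψ = (f (RCLike.re μ) : 𝕜) • ψ := by
  rw [hA.spectral_theorem, Unitary.conjStarAlgAut_apply] at h
  rw [hA.cfc_eq, IsHermitian.cfc, Unitary.conjStarAlgAut_apply]
  generalize hA.eigenvalues = d at h ⊢
  generalize hA.eigenvectorUnitary = V at h ⊢
  set U : Matrix n n 𝕜 := ↑V
  have hUU : star U * U = 1 := Unitary.coe_star_mul_self V
  have hUU' : U * star U = 1 := Unitary.coe_mul_star_self V
  set φ := star U *ᵥ ψ
  have hψ : U *ᵥ φ = ψ := by rw [mulVec_mulVec, hUU', one_mulVec]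
  have hφ : diagonal (RCLike.ofReal ∘ d) *ᵥ φ = μ • φ := by
    simpa [φ, mulVec_mulVec, ← Matrix.mul_assoc, hUU, mulVec_smul] using congrArg (star U *ᵥ ·) h
  have hfφ : diagonal (RCLike.ofReal ∘ f ∘ d) *ᵥ φ = (f (RCLike.re μ) : 𝕜) • φ := by
    ext k
    have hk := congrFun hφ k
    simp only [mulVec_diagonal, Function.comp_apply, Pi.smul_apply, smul_eq_mul] at hk ⊢
    rcases eq_or_ne (φ k) 0 with h0 | h0
    · simp [h0]
    · rw [← mul_right_cancel₀ h0 hk, RCLike.ofReal_re]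
  rw [← mulVec_mulVec, ← mulVec_mulVec]
  change U *ᵥ (_ *ᵥ φ) = _
  rw [hfφ, mulVec_smul, hψ]

namespace PosSemidef

variable [DecidableEq n] {A : Matrix n n 𝕜}

open scoped MatrixOrder

lemma sqrt_eq_cfc (hA : A.PosSemidef) : hA.sqrt = cfc Real.sqrt A :=
  (hA.1.cfc_eq _).symm

lemma sqrt_eq_CFC_sqrt (hA : A.PosSemidef) : hA.sqrt = CFC.sqrt A := by
  rw [sqrt_eq_cfc, CFC.sqrt_eq_real_sqrt A hA.nonneg, cfcₙ_eq_cfc]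

lemma sqrt_mul_self (hA : A.PosSemidef) : hA.sqrt * hA.sqrt = A := by
  rw [sqrt_eq_CFC_sqrt, CFC.sqrt_mul_sqrt_self A hA.nonneg]

lemma isHermitian_sqrt (hA : A.PosSemidef) : hA.sqrt.IsHermitian := by
  rw [sqrt_eq_CFC_sqrt]
  exact (CFC.sqrt_nonneg A).posSemidef.1

lemma sqrt_mulVec_eq_smul (hA : A.PosSemidef) {ψ : n → 𝕜} {μ : 𝕜} (h : A *ᵥ ψ = μ • ψ) :
    hA.sqrt *ᵥ ψ = (√(RCLike.re μ) : 𝕜) • ψ := by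
  rw [sqrt_eq_cfc]
  exact hA.1.cfc_mulVec_eq_smul _ h

end PosSemidef

end Matrix

/-- For a POVM `(A i)` (positive semidefinite operators summing to
the identity) measured via the Lüders channel `ρ ↦ ∑ i, √(A i) ρ √(A i)`, and a unit
vector `ψ`, the channel fixes `|ψ⟩⟨ψ|` iff `ψ` is a common eigenvector of all the
operators `A i`. -/
theorem zero_disturbance_lueders {n : ℕ} {I : Type*} [Fintype I]
    (A : I → Matrix (Fin n) (Fin n) ℂ)
    (hA : ∀ i, (A i).PosSemidef)
    (hsum : ∑ i, A i = 1)
    (ψ : Fin n → ℂ) (hψ : star ψ ⬝ᵥ ψ = 1) :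
    (∑ i, (hA i).sqrt * vecMulVec ψ (star ψ) * (hA i).sqrt = vecMulVec ψ (star ψ)) ↔
      ∀ i, ∃ lam : ℂ, (A i) *ᵥ ψ = lam • ψ := by
  rw [Finset.sum_congr rfl fun i _ => (hA i).isHermitian_sqrt.mul_vecMulVec_star_mul_self ψ]
  constructor
  · intro h i
    obtain ⟨c, hc⟩ := exists_smul_eq_of_forall_star_dotProduct_eq_zero fun x hx =>
      star_dotProduct_eq_zero_of_sum_vecMulVec_eq h hx i
    exact ⟨c * c, by rw [← (hA i).sqrt_mul_self, ← mulVec_mulVec, hc, mulVec_smul, hc, smul_smul]⟩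
  · intro h
    choose lam hlam using h
    set s : I → ℂ := fun i => (√(RCLike.re (lam i)) : ℂ)
    have hs : ∀ i, (hA i).sqrt *ᵥ ψ = s i • ψ := fun i => (hA i).sqrt_mulVec_eq_smul (hlam i)
    have hKraus : ∑ i, ((hA i).sqrt)ᴴ * (hA i).sqrt = 1 := by
      simp_rw [(hA _).isHermitian_sqrt.eq, PosSemidef.sqrt_mul_self, hsum]
    have hnorm : ∑ i, s i * star (s i) = 1 := by
      simpa only [hs, star_smul, smul_dotProduct, dotProduct_smul, hψ, smul_eq_mul, mul_one]
        using sum_star_mulVec_dotProduct_mulVec hKraus ψ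
    simp_rw [hs, star_smul, smul_vecMulVec, vecMulVec_smul, smul_smul, ← Finset.sum_smul]
    rw [hnorm, one_smul]
end

section
/- Let A_1, …, A_N (N ≥ 1) be projective measurements on a finite-dimensional complex Hilbert space H, where A_m is given by the family of projections (P^m_i), and define D_F(A_m;ψ) = 1 − Σ_i ⟨ψ, P^m_i ψ⟩² for unit vectors ψ. Then the infimum over unit vectors ψ of the average (1/N) Σ_{m=1}^{N} D_F(A_m;ψ) equals 0 if and only if the measurements have a common eigenvector, i.e. there exists a unit vector ψ such that for every m there is an index k_m with P^m_{k_m} ψ = ψ. In particular, if the measurements have no common eigenvector, there exists d > 0 such that (1/N) Σ_m D_F(A_m;ψ) ≥ d for every unit vector ψ. -/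
/-!
For a unit vector `ψ` the numbers `pᵢ = ⟨ψ, Pᵢ ψ⟩` of a projective measurement form a
probability vector, so `∑ pᵢ² ≤ ∑ pᵢ = 1`, with equality iff some `p_k = 1`, i.e. iff
`P_k ψ = ψ`. Hence every disturbance is nonnegative and the average vanishes exactly at common
eigenvectors. The average is continuous on the compact unit sphere, so its infimum is a minimum:
it is `0` iff a common eigenvector exists, and otherwise it is the required `d > 0`.
-/

open Matrix

section ProbabilityVector

variable {ι : Type*} [Fintype ι] {p : ι → ℝ}

lemma le_one_of_sum_eq_one (hp : ∀ i, 0 ≤ p i) (hp1 : ∑ i, p i = 1) (i : ι) : p i ≤ 1 :=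
  hp1 ▸ Finset.single_le_sum (fun j _ => hp j) (Finset.mem_univ i)

lemma sum_sq_le_one_of_sum_eq_one (hp : ∀ i, 0 ≤ p i) (hp1 : ∑ i, p i = 1) :
    ∑ i, p i ^ 2 ≤ 1 :=
  calc ∑ i, p i ^ 2 ≤ ∑ i, p i := Finset.sum_le_sum fun i _ => by
        nlinarith [hp i, le_one_of_sum_eq_one hp hp1 i]
    _ = 1 := hp1

lemma sum_sq_eq_one_iff_of_sum_eq_one (hp : ∀ i, 0 ≤ p i) (hp1 : ∑ i, p i = 1) :
    ∑ i, p i ^ 2 = 1 ↔ ∃ k, p k = 1 := by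
  constructor
  · intro hsq
    have hzero : ∀ i, p i * (1 - p i) = 0 := by
      have hsum : ∑ i, p i * (1 - p i) = 0 := by
        simp only [mul_sub, mul_one, Finset.sum_sub_distrib, ← sq, hp1, hsq, sub_self]
      refine fun i => (Finset.sum_eq_zero_iff_of_nonneg fun j _ => ?_).mp hsum i (Finset.mem_univ i)
      exact mul_nonneg (hp j) (sub_nonneg.mpr (le_one_of_sum_eq_one hp hp1 j))
    obtain ⟨k, hk⟩ : ∃ k, p k ≠ 0 := by
      by_contra! h
      simp [h] at hp1
    exact ⟨k, by linarith [(mul_eq_zero.mp (hzero k)).resolve_left hk]⟩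
  · rintro ⟨k, hk⟩
    refine le_antisymm (sum_sq_le_one_of_sum_eq_one hp hp1) ?_
    calc 1 = p k ^ 2 := by rw [hk, one_pow]
      _ ≤ ∑ i, p i ^ 2 := Finset.single_le_sum (fun j _ => sq_nonneg (p j)) (Finset.mem_univ k)

end ProbabilityVector

lemma one_div_mul_sum_eq_zero_iff {N : ℕ} {f : Fin N → ℝ} (hf : ∀ m, 0 ≤ f m) :
    1 / (N : ℝ) * ∑ m, f m = 0 ↔ ∀ m, f m = 0 := by
  rcases N.eq_zero_or_pos with rfl | hN
  · simp
  · rw [mul_eq_zero, one_div, inv_eq_zero, Nat.cast_eq_zero, or_iff_right hN.ne',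
      Finset.sum_eq_zero_iff_of_nonneg fun m _ => hf m]
    simp

section StarDotProduct

variable {n : Type*} [Fintype n]

open ComplexOrder in
lemma re_star_dotProduct_self_nonneg (v : n → ℂ) : 0 ≤ (star v ⬝ᵥ v).re :=
  (Complex.nonneg_iff.mp (dotProduct_star_self_nonneg v)).1

open ComplexOrder in
lemma re_star_dotProduct_self_eq_zero_iff {v : n → ℂ} : (star v ⬝ᵥ v).re = 0 ↔ v = 0 := by
  refine ⟨fun h => dotProduct_star_self_eq_zero.mp (Complex.ext h ?_), fun h => by simp [h]⟩
  exact (Complex.nonneg_iff.mp (dotProduct_star_self_nonneg v)).2.symm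

lemma star_dotProduct_self_eq_one_iff_norm_toLp (ψ : n → ℂ) :
    star ψ ⬝ᵥ ψ = 1 ↔ ‖WithLp.toLp 2 ψ‖ = 1 := by
  have h := inner_self_eq_norm_sq_to_K (𝕜 := ℂ) (WithLp.toLp 2 ψ)
  rw [EuclideanSpace.inner_toLp_toLp, dotProduct_comm] at h
  rw [h, ← RCLike.ofReal_pow, ← RCLike.ofReal_one, RCLike.ofReal_inj]
  exact pow_eq_one_iff_of_nonneg (norm_nonneg _) two_ne_zero

lemma isCompact_setOf_star_dotProduct_self_eq_one :
    IsCompact {ψ : n → ℂ | star ψ ⬝ᵥ ψ = 1} := by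
  convert (isCompact_sphere (0 : EuclideanSpace ℂ n) 1).image (PiLp.continuous_ofLp _ _) using 1
  ext ψ
  simp only [Set.mem_ofPred_eq, star_dotProduct_self_eq_one_iff_norm_toLp, Set.mem_image,
    mem_sphere_zero_iff_norm]
  exact ⟨fun h => ⟨_, h, rfl⟩, by rintro ⟨x, hx, rfl⟩; exact hx⟩

end StarDotProduct

namespace IsStarProjection

variable {n : Type*} [Fintype n] {P : Matrix n n ℂ}

lemma star_dotProduct_mulVec (hP : IsStarProjection P) (ψ : n → ℂ) :
    star ψ ⬝ᵥ P *ᵥ ψ = star (P *ᵥ ψ) ⬝ᵥ P *ᵥ ψ := by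
  rw [star_mulVec, ← star_eq_conjTranspose, hP.isSelfAdjoint.star_eq, ← dotProduct_mulVec,
    mulVec_mulVec, hP.isIdempotentElem.eq]

lemma re_star_dotProduct_mulVec_nonneg (hP : IsStarProjection P) (ψ : n → ℂ) :
    0 ≤ (star ψ ⬝ᵥ P *ᵥ ψ).re :=
  hP.star_dotProduct_mulVec ψ ▸ re_star_dotProduct_self_nonneg _

lemma mulVec_eq_zero_of_re_star_dotProduct_mulVec_eq_zero (hP : IsStarProjection P)
    {ψ : n → ℂ} (h : (star ψ ⬝ᵥ P *ᵥ ψ).re = 0) : P *ᵥ ψ = 0 :=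
  re_star_dotProduct_self_eq_zero_iff.mp (hP.star_dotProduct_mulVec ψ ▸ h)

end IsStarProjection

section ProjectiveMeasurement

variable {ι n : Type*} [Fintype ι] [Fintype n]

def outcomeProb (P : ι → Matrix n n ℂ) (ψ : n → ℂ) (i : ι) : ℝ :=
  (star ψ ⬝ᵥ P i *ᵥ ψ).re

def fidelityDisturbance (P : ι → Matrix n n ℂ) (ψ : n → ℂ) : ℝ :=
  1 - ∑ i, outcomeProb P ψ i ^ 2

lemma continuous_fidelityDisturbance (P : ι → Matrix n n ℂ) :
    Continuous (fidelityDisturbance P) := by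
  unfold fidelityDisturbance outcomeProb
  fun_prop

variable [DecidableEq n]

structure IsProjectiveMeasurement (P : ι → Matrix n n ℂ) : Prop where
  isStarProjection : ∀ i, IsStarProjection (P i)
  sum_eq_one : ∑ i, P i = 1

namespace IsProjectiveMeasurement

variable {P : ι → Matrix n n ℂ} {ψ : n → ℂ}

lemma outcomeProb_nonneg (hP : IsProjectiveMeasurement P) (i : ι) : 0 ≤ outcomeProb P ψ i :=
  (hP.isStarProjection i).re_star_dotProduct_mulVec_nonneg ψ

lemma sum_outcomeProb (hP : IsProjectiveMeasurement P) (hψ : star ψ ⬝ᵥ ψ = 1) :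
    ∑ i, outcomeProb P ψ i = 1 := by
  simp only [outcomeProb, ← Complex.re_sum, ← dotProduct_sum, ← sum_mulVec, hP.sum_eq_one,
    one_mulVec, hψ, Complex.one_re]

lemma outcomeProb_eq_one_iff (hP : IsProjectiveMeasurement P) (hψ : star ψ ⬝ᵥ ψ = 1)
    {k : ι} : outcomeProb P ψ k = 1 ↔ P k *ᵥ ψ = ψ := by
  refine ⟨fun h => ?_, fun h => by simp [outcomeProb, h, hψ]⟩
  -- `1 - P k` is again a star projection, and its expectation in `ψ` is `1 - 1 = 0`.
  have hre : (star ψ ⬝ᵥ (1 - P k) *ᵥ ψ).re = 0 := by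
    rw [sub_mulVec, one_mulVec, dotProduct_sub, Complex.sub_re, hψ, Complex.one_re]
    exact sub_eq_zero.mpr h.symm
  have := (hP.isStarProjection k).one_sub.mulVec_eq_zero_of_re_star_dotProduct_mulVec_eq_zero hre
  rwa [sub_mulVec, one_mulVec, sub_eq_zero, eq_comm] at this

lemma fidelityDisturbance_nonneg (hP : IsProjectiveMeasurement P) (hψ : star ψ ⬝ᵥ ψ = 1) :
    0 ≤ fidelityDisturbance P ψ :=
  sub_nonneg.mpr (sum_sq_le_one_of_sum_eq_one hP.outcomeProb_nonneg (hP.sum_outcomeProb hψ))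

lemma fidelityDisturbance_eq_zero_iff (hP : IsProjectiveMeasurement P)
    (hψ : star ψ ⬝ᵥ ψ = 1) : fidelityDisturbance P ψ = 0 ↔ ∃ k, P k *ᵥ ψ = ψ := by
  rw [fidelityDisturbance, sub_eq_zero, eq_comm,
    sum_sq_eq_one_iff_of_sum_eq_one hP.outcomeProb_nonneg (hP.sum_outcomeProb hψ)]
  exact exists_congr fun k => hP.outcomeProb_eq_one_iff hψ

end IsProjectiveMeasurement

end ProjectiveMeasurement

theorem disturbance_tradeoff_family_general {n N : ℕ} (hn : 0 < n)
    {I : Fin N → Type*} [∀ m, Fintype (I m)]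
    (P : (m : Fin N) → I m → Matrix (Fin n) (Fin n) ℂ)
    (hherm : ∀ m i, (P m i).IsHermitian)
    (hproj : ∀ m i, P m i * P m i = P m i)
    (hsum : ∀ m, ∑ i, P m i = 1) :
    (sInf {x : ℝ | ∃ ψ : Fin n → ℂ, star ψ ⬝ᵥ ψ = 1 ∧
        x = (1 / (N : ℝ)) * ∑ m, (1 - ∑ i, ((star ψ ⬝ᵥ (P m i) *ᵥ ψ).re) ^ 2)} = 0
      ↔ ∃ ψ : Fin n → ℂ, star ψ ⬝ᵥ ψ = 1 ∧ ∀ m, ∃ k, (P m k) *ᵥ ψ = ψ) ∧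
    ((¬ ∃ ψ : Fin n → ℂ, star ψ ⬝ᵥ ψ = 1 ∧ ∀ m, ∃ k, (P m k) *ᵥ ψ = ψ) →
      ∃ d : ℝ, 0 < d ∧ ∀ ψ : Fin n → ℂ, star ψ ⬝ᵥ ψ = 1 →
        (1 / (N : ℝ)) * ∑ m, (1 - ∑ i, ((star ψ ⬝ᵥ (P m i) *ᵥ ψ).re) ^ 2) ≥ d) := by
  have hP : ∀ m, IsProjectiveMeasurement (P m) :=
    fun m => ⟨fun i => ⟨hproj m i, hherm m i⟩, hsum m⟩
  set F : (Fin n → ℂ) → ℝ := fun ψ => 1 / (N : ℝ) * ∑ m, fidelityDisturbance (P m) ψ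
  change (sInf {x | ∃ ψ, star ψ ⬝ᵥ ψ = 1 ∧ x = F ψ} = 0 ↔ _) ∧
    (_ → ∃ d : ℝ, 0 < d ∧ ∀ ψ, star ψ ⬝ᵥ ψ = 1 → F ψ ≥ d)
  have hF_nonneg {ψ} (hψ : star ψ ⬝ᵥ ψ = 1) : 0 ≤ F ψ :=
    mul_nonneg (by positivity) (Finset.sum_nonneg fun m _ => (hP m).fidelityDisturbance_nonneg hψ)
  have hF_eq_zero {ψ} (hψ : star ψ ⬝ᵥ ψ = 1) :
      F ψ = 0 ↔ ∀ m, ∃ k, P m k *ᵥ ψ = ψ :=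
    (one_div_mul_sum_eq_zero_iff fun m => (hP m).fidelityDisturbance_nonneg hψ).trans
      (forall_congr' fun m => (hP m).fidelityDisturbance_eq_zero_iff hψ)
  obtain ⟨ψ₀, hψ₀, hmin⟩ := isCompact_setOf_star_dotProduct_self_eq_one.exists_isMinOn
    ⟨Pi.single ⟨0, hn⟩ 1, by simp⟩
    (continuous_const.mul (continuous_finsetSum _ fun m _ =>
      continuous_fidelityDisturbance (P m))).continuousOn
  have hInf : sInf {x | ∃ ψ, star ψ ⬝ᵥ ψ = 1 ∧ x = F ψ} = F ψ₀ :=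
    IsLeast.csInf_eq ⟨⟨ψ₀, hψ₀, rfl⟩, by rintro _ ⟨ψ, hψ, rfl⟩; exact hmin hψ⟩
  rw [hInf]
  refine ⟨⟨fun h => ⟨ψ₀, hψ₀, (hF_eq_zero hψ₀).mp h⟩, ?_⟩,
    fun hno => ⟨F ψ₀, ?_, fun ψ hψ => hmin hψ⟩⟩
  · rintro ⟨ψ, hψ, hcommon⟩
    exact le_antisymm ((hF_eq_zero hψ).mpr hcommon ▸ hmin hψ) (hF_nonneg hψ₀)
  · exact (hF_nonneg hψ₀).lt_of_ne fun h =>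
      hno ⟨ψ₀, hψ₀, (hF_eq_zero hψ₀).mp h.symm⟩

/-- For `N ≥ 1` projective measurements `(P m i)` on a (nonzero)
finite-dimensional complex Hilbert space, the infimum over unit vectors of the average
fidelity-based disturbance `(1/N) ∑ m, (1 - ∑ i ⟨ψ, P m i ψ⟩²)` vanishes iff the
measurements have a common eigenvector; in particular, if they have no common
eigenvector, the average disturbance is bounded below by some `d > 0` uniformly over
all unit vectors. -/
theorem disturbance_tradeoff_family {n N : ℕ} (hn : 0 < n) (hN : 1 ≤ N)
    {I : Fin N → Type*} [∀ m, Fintype (I m)]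
    (P : (m : Fin N) → I m → Matrix (Fin n) (Fin n) ℂ)
    (hherm : ∀ m i, (P m i).IsHermitian)
    (hproj : ∀ m i, P m i * P m i = P m i)
    (horth : ∀ m, ∀ i j, i ≠ j → P m i * P m j = 0)
    (hsum : ∀ m, ∑ i, P m i = 1) :
    (sInf {x : ℝ | ∃ ψ : Fin n → ℂ, star ψ ⬝ᵥ ψ = 1 ∧
        x = (1 / (N : ℝ)) * ∑ m, (1 - ∑ i, ((star ψ ⬝ᵥ (P m i) *ᵥ ψ).re) ^ 2)} = 0
      ↔ ∃ ψ : Fin n → ℂ, star ψ ⬝ᵥ ψ = 1 ∧ ∀ m, ∃ k, (P m k) *ᵥ ψ = ψ) ∧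
    ((¬ ∃ ψ : Fin n → ℂ, star ψ ⬝ᵥ ψ = 1 ∧ ∀ m, ∃ k, (P m k) *ᵥ ψ = ψ) →
      ∃ d : ℝ, 0 < d ∧ ∀ ψ : Fin n → ℂ, star ψ ⬝ᵥ ψ = 1 →
        (1 / (N : ℝ)) * ∑ m, (1 - ∑ i, ((star ψ ⬝ᵥ (P m i) *ᵥ ψ).re) ^ 2) ≥ d) :=
  disturbance_tradeoff_family_general hn P hherm hproj hsum
end

section
/- Let B_1, …, B_N be N orthonormal bases of the d-dimensional complex Hilbert space ℂ^d (each B_m = (|i_m⟩)_{i=1}^{d}) that are pairwise mutually unbiased: |⟨i_m, j_n⟩|² = 1/d for all m ≠ n and all i, j. Then for every unit vector ψ, with p_m(i) = |⟨i_m, ψ⟩|², the average fidelity-based disturbance satisfies (1/N) Σ_{m=1}^{N} (1 − Σ_{i=1}^{d} p_m(i)²) ≥ (1 − 1/N)(1 − 1/d). -/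
/-!
Embed operators on `ℂ^d` into the Hilbert–Schmidt space `ℂ^(d × d)`, so that the projector
`|u⟩⟨u|` becomes a vector `hsProj u` with `⟪|u⟩⟨u|, |v⟩⟨v|⟫ = |⟨u, v⟩|²`. For each basis put
`Q_m = ∑ᵢ (p_m(i) - 1/d) |i_m⟩⟨i_m|`. Mutual unbiasedness makes the `Q_m` pairwise orthogonal,
and `⟪Q_m, |ψ⟩⟨ψ| - I/d⟫ = ‖Q_m‖²`, so Bessel's inequality gives
`∑ₘ ∑ᵢ (p_m(i) - 1/d)² ≤ ‖|ψ⟩⟨ψ| - I/d‖² = 1 - 1/d`, i.e. `∑ₘ ∑ᵢ p_m(i)² ≤ 1 + (N - 1)/d`.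
Averaging over the `N` bases gives the claim.
-/

open ComplexConjugate WithLp
open scoped InnerProductSpace

theorem sum_norm_sq_le_of_orthogonal {κ E : Type*} [NormedAddCommGroup E] [InnerProductSpace ℝ E]
    (s : Finset κ) (y : κ → E) (x : E)
    (horth : ∀ k ∈ s, ∀ l ∈ s, k ≠ l → ⟪y k, y l⟫_ℝ = 0) (hx : ∀ k ∈ s, ⟪y k, x⟫_ℝ = ‖y k‖ ^ 2) :
    ∑ k ∈ s, ‖y k‖ ^ 2 ≤ ‖x‖ ^ 2 := by
  have hYx : ⟪∑ k ∈ s, y k, x⟫_ℝ = ∑ k ∈ s, ‖y k‖ ^ 2 := by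
    rw [sum_inner]; exact Finset.sum_congr rfl hx
  have hYY : ‖∑ k ∈ s, y k‖ ^ 2 = ∑ k ∈ s, ‖y k‖ ^ 2 := by
    rw [← real_inner_self_eq_norm_sq, sum_inner]
    refine Finset.sum_congr rfl fun k hk => ?_
    rw [inner_sum, Finset.sum_eq_single_of_mem k hk fun l hl hlk => horth k hk l hl hlk.symm,
      real_inner_self_eq_norm_sq]
  have hexp := norm_sub_sq_real x (∑ k ∈ s, y k)
  rw [real_inner_comm, hYx, hYY] at hexp
  linarith [sq_nonneg ‖x - ∑ k ∈ s, y k‖]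

theorem sum_sub_inv_card_sq {ι : Type*} [Fintype ι] {p : ι → ℝ} (hp : ∑ i, p i = 1) :
    ∑ i, (p i - 1 / (Fintype.card ι : ℝ)) ^ 2 = ∑ i, p i ^ 2 - 1 / (Fintype.card ι : ℝ) := by
  have : Nonempty ι := by
    by_contra h
    simp [not_nonempty_iff.1 h] at hp
  simp only [sub_sq, Finset.sum_add_distrib, Finset.sum_sub_distrib, ← Finset.sum_mul,
    ← Finset.mul_sum, hp]
  simp [field]
  ring

section
variable {ι κ κ' : Type*} [Fintype ι] [Fintype κ] [Fintype κ']

noncomputable def hsProj (u : EuclideanSpace ℂ ι) : EuclideanSpace ℂ (ι × ι) :=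
  toLp 2 fun ab => u ab.1 * conj (u ab.2)

noncomputable def hsOne [DecidableEq ι] : EuclideanSpace ℂ (ι × ι) :=
  toLp 2 fun ab => if ab.1 = ab.2 then 1 else 0

theorem inner_hsProj_hsProj (u v : EuclideanSpace ℂ ι) :
    ⟪hsProj u, hsProj v⟫_ℝ = ‖⟪u, v⟫_ℂ‖ ^ 2 := by
  have key : ∑ a, ∑ b, v a * conj (v b) * conj (u a * conj (u b)) = ⟪u, v⟫_ℂ * conj ⟪u, v⟫_ℂ := by
    simp only [PiLp.inner_apply, RCLike.inner_apply', map_sum, Finset.sum_mul_sum, map_mul,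
      Complex.conj_conj]
    exact Finset.sum_congr rfl fun a _ => Finset.sum_congr rfl fun b _ => by ring
  rw [PiLp.inner_apply]
  simp only [hsProj, Complex.inner, Fintype.sum_prod_type, ← Complex.re_sum]
  rw [key, Complex.mul_conj', ← Complex.ofReal_pow, Complex.ofReal_re]

theorem inner_hsProj_hsOne [DecidableEq ι] (u : EuclideanSpace ℂ ι) :
    ⟪hsProj u, hsOne⟫_ℝ = ‖u‖ ^ 2 := by
  simp [hsProj, hsOne, PiLp.inner_apply, Fintype.sum_prod_type, EuclideanSpace.norm_sq_eq,
    apply_ite Complex.re, Complex.sq_norm, Complex.normSq_apply]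

theorem norm_hsOne_sq [DecidableEq ι] :
    ‖(hsOne : EuclideanSpace ℂ (ι × ι))‖ ^ 2 = Fintype.card ι := by
  simp only [hsOne, EuclideanSpace.norm_sq_eq, Fintype.sum_prod_type]
  simp [apply_ite (‖·‖ ^ 2)]

theorem inner_sum_smul_hsProj (u : κ → EuclideanSpace ℂ ι) (v : κ' → EuclideanSpace ℂ ι)
    (c : κ → ℝ) (c' : κ' → ℝ) :
    ⟪∑ k, c k • hsProj (u k), ∑ l, c' l • hsProj (v l)⟫_ℝ =
      ∑ k, ∑ l, c k * c' l * ‖⟪u k, v l⟫_ℂ‖ ^ 2 := by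
  simp_rw [sum_inner, inner_sum, real_inner_smul_left, real_inner_smul_right,
    inner_hsProj_hsProj]
  simp only [mul_assoc]

theorem norm_sum_smul_hsProj_sq [DecidableEq κ] {u : κ → EuclideanSpace ℂ ι}
    (hu : Orthonormal ℂ u) (c : κ → ℝ) :
    ‖∑ k, c k • hsProj (u k)‖ ^ 2 = ∑ k, c k ^ 2 := by
  rw [← real_inner_self_eq_norm_sq, inner_sum_smul_hsProj]
  simp [orthonormal_iff_ite.1 hu, apply_ite (‖·‖ ^ 2), sq]

theorem inner_sum_smul_hsProj_eq_zero_of_unbiased {u : κ → EuclideanSpace ℂ ι}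
    {v : κ' → EuclideanSpace ℂ ι} {t : ℝ} (huv : ∀ k l, ‖⟪u k, v l⟫_ℂ‖ ^ 2 = t)
    {c : κ → ℝ} (hc : ∑ k, c k = 0) (c' : κ' → ℝ) :
    ⟪∑ k, c k • hsProj (u k), ∑ l, c' l • hsProj (v l)⟫_ℝ = 0 := by
  simp [inner_sum_smul_hsProj, huv, ← Finset.sum_mul, ← Finset.mul_sum, hc]

theorem inner_sum_smul_hsProj_hsProj_sub_smul_hsOne [DecidableEq ι]
    {u : κ → EuclideanSpace ℂ ι} (hu : ∀ k, ‖u k‖ = 1) (c : κ → ℝ) (φ : EuclideanSpace ℂ ι)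
    (t : ℝ) :
    ⟪∑ k, c k • hsProj (u k), hsProj φ - t • hsOne⟫_ℝ = ∑ k, c k * (‖⟪u k, φ⟫_ℂ‖ ^ 2 - t) := by
  simp [sum_inner, inner_sub_right, real_inner_smul_left, real_inner_smul_right,
    inner_hsProj_hsProj, inner_hsProj_hsOne, hu, mul_sub, mul_comm t]

theorem norm_hsProj_sub_smul_hsOne_sq [DecidableEq ι] {φ : EuclideanSpace ℂ ι} (hφ : ‖φ‖ = 1)
    (t : ℝ) : ‖hsProj φ - t • hsOne‖ ^ 2 = 1 - 2 * t + t ^ 2 * Fintype.card ι := by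
  rw [norm_sub_sq_real, real_inner_smul_right, inner_hsProj_hsOne, norm_smul, mul_pow,
    norm_hsOne_sq, ← real_inner_self_eq_norm_sq, inner_hsProj_hsProj, inner_self_eq_norm_sq_to_K,
    hφ]
  simp

theorem sum_sum_sub_inv_card_sq_le [DecidableEq ι]
    (b : κ → OrthonormalBasis ι ℂ (EuclideanSpace ℂ ι))
    (hmub : Pairwise fun m n => ∀ i j, ‖⟪b m i, b n j⟫_ℂ‖ ^ 2 = 1 / (Fintype.card ι : ℝ))
    {φ : EuclideanSpace ℂ ι} (hφ : ‖φ‖ = 1) :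
    ∑ m, ∑ i, (‖⟪b m i, φ⟫_ℂ‖ ^ 2 - 1 / (Fintype.card ι : ℝ)) ^ 2
      ≤ 1 - 1 / (Fintype.card ι : ℝ) := by
  set d : ℝ := (Fintype.card ι : ℝ)
  set c : κ → ι → ℝ := fun m i => ‖⟪b m i, φ⟫_ℂ‖ ^ 2 - 1 / d
  have hd : d ≠ 0 := by
    have : Nonempty ι := by
      by_contra h
      have := not_nonempty_iff.1 h
      simp [Subsingleton.elim φ 0] at hφ
    positivity
  have hc : ∀ m, ∑ i, c m i = 0 := fun m => by
    simp [c, Finset.sum_sub_distrib, (b m).sum_sq_norm_inner_right, hφ, d, field]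
  set y : κ → EuclideanSpace ℂ (ι × ι) := fun m => ∑ i, c m i • hsProj (b m i)
  have hy : ∀ m, ‖y m‖ ^ 2 = ∑ i, c m i ^ 2 := fun m => norm_sum_smul_hsProj_sq (b m).orthonormal _
  have := sum_norm_sq_le_of_orthogonal Finset.univ y (hsProj φ - (1 / d) • hsOne)
    (fun m _ n _ hmn => inner_sum_smul_hsProj_eq_zero_of_unbiased (hmub hmn) (hc m) _)
    (fun m _ => by
      rw [hy, inner_sum_smul_hsProj_hsProj_sub_smul_hsOne (fun i => (b m).norm_eq_one i)]
      simp [sq, c])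
  simp only [hy, norm_hsProj_sub_smul_hsOne_sq hφ] at this
  convert this using 1
  simp only [d]
  field_simp
  ring

theorem sum_sum_sq_norm_inner_sq_le [DecidableEq ι]
    (b : κ → OrthonormalBasis ι ℂ (EuclideanSpace ℂ ι))
    (hmub : Pairwise fun m n => ∀ i j, ‖⟪b m i, b n j⟫_ℂ‖ ^ 2 = 1 / (Fintype.card ι : ℝ))
    {φ : EuclideanSpace ℂ ι} (hφ : ‖φ‖ = 1) :
    ∑ m, ∑ i, (‖⟪b m i, φ⟫_ℂ‖ ^ 2) ^ 2
      ≤ 1 + ((Fintype.card κ : ℝ) - 1) / (Fintype.card ι : ℝ) := by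
  have := sum_sum_sub_inv_card_sq_le b hmub hφ
  simp only [fun m => sum_sub_inv_card_sq (p := fun i => ‖⟪b m i, φ⟫_ℂ‖ ^ 2)
    (by rw [(b m).sum_sq_norm_inner_right, hφ, one_pow]), Finset.sum_sub_distrib,
    Finset.sum_const, Finset.card_univ, nsmul_eq_mul] at this
  have hsplit : ((Fintype.card κ : ℝ) - 1) / Fintype.card ι
      = Fintype.card κ * (1 / Fintype.card ι) - 1 / Fintype.card ι := by ring
  linarith

noncomputable def orthonormalBasisOfStarDotProduct [DecidableEq ι] (u : ι → ι → ℂ)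
    (hu : ∀ i j, star (u i) ⬝ᵥ u j = if i = j then 1 else 0) :
    OrthonormalBasis ι ℂ (EuclideanSpace ℂ ι) :=
  have hon : Orthonormal ℂ fun i => toLp 2 (u i) := orthonormal_iff_ite.2 fun i j => by
    rw [EuclideanSpace.inner_toLp_toLp, dotProduct_comm, hu]
  OrthonormalBasis.mk hon (hon.linearIndependent.span_eq_top_of_card_eq_finrank' (by simp)).ge

theorem orthonormalBasisOfStarDotProduct_apply [DecidableEq ι] (u : ι → ι → ℂ)
    (hu : ∀ i j, star (u i) ⬝ᵥ u j = if i = j then 1 else 0) (i : ι) :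
    orthonormalBasisOfStarDotProduct u hu i = toLp 2 (u i) := by
  rw [orthonormalBasisOfStarDotProduct, OrthonormalBasis.coe_mk]

theorem norm_toLp_eq_one_of_star_dotProduct {ψ : ι → ℂ} (hψ : star ψ ⬝ᵥ ψ = 1) :
    ‖(toLp 2 ψ : EuclideanSpace ℂ ι)‖ = 1 := by
  rw [← pow_eq_one_iff_of_nonneg (norm_nonneg _) two_ne_zero, @norm_sq_eq_re_inner ℂ,
    EuclideanSpace.inner_toLp_toLp, dotProduct_comm, hψ, RCLike.one_re]

end

/-- For `N ≥ 1` pairwise mutually unbiased orthonormal bases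
`B 1, …, B N` of `ℂ^d` and any unit vector `ψ`, with outcome probabilities
`p_m(i) = |⟨i_m, ψ⟩|²`, the average fidelity-based disturbance satisfies
`(1/N) ∑ m (1 - ∑ i p_m(i)²) ≥ (1 - 1/N)(1 - 1/d)`. -/
theorem disturbance_tradeoff_mubs {d N : ℕ} (hN : 0 < N)
    (B : Fin N → Fin d → (Fin d → ℂ))
    (hortho : ∀ m, ∀ i j, star (B m i) ⬝ᵥ B m j = if i = j then (1 : ℂ) else 0)
    (hmub : ∀ m n, m ≠ n → ∀ i j,
      ‖star (B m i) ⬝ᵥ B n j‖ ^ 2 = 1 / (d : ℝ))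
    (ψ : Fin d → ℂ) (hψ : star ψ ⬝ᵥ ψ = 1) :
    (1 / (N : ℝ)) * ∑ m, (1 - ∑ i, (‖star (B m i) ⬝ᵥ ψ‖ ^ 2) ^ 2)
      ≥ (1 - 1 / (N : ℝ)) * (1 - 1 / (d : ℝ)) := by
  let b m := orthonormalBasisOfStarDotProduct (B m) (hortho m)
  have hb : ∀ m i v, ⟪b m i, toLp 2 v⟫_ℂ = star (B m i) ⬝ᵥ v := fun m i v => by
    rw [orthonormalBasisOfStarDotProduct_apply, EuclideanSpace.inner_toLp_toLp, dotProduct_comm]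
  have hcoll := sum_sum_sq_norm_inner_sq_le b
    (fun m n hmn i j => by
      rw [orthonormalBasisOfStarDotProduct_apply (B n), hb, Fintype.card_fin]
      exact hmub m n hmn i j)
    (norm_toLp_eq_one_of_star_dotProduct hψ)
  simp only [hb, Fintype.card_fin] at hcoll
  have hN' : (N : ℝ) ≠ 0 := by positivity
  rw [ge_iff_le, Finset.sum_sub_distrib, Finset.sum_const, Finset.card_univ, Fintype.card_fin,
    nsmul_eq_mul, mul_one]
  calc (1 - 1 / (N : ℝ)) * (1 - 1 / d) = 1 / N * (N - (1 + (N - 1) / d)) := by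
        field_simp
        ring
    _ ≤ 1 / N * (N - ∑ m, ∑ i, (‖star (B m i) ⬝ᵥ ψ‖ ^ 2) ^ 2) := by gcongr
end

section
/- Let B_1, …, B_{d+1} be a complete set of d+1 orthonormal bases of ℂ^d that are pairwise mutually unbiased (|⟨i_m, j_n⟩|² = 1/d for m ≠ n). Then for every unit vector ψ, with p_m(i) = |⟨i_m, ψ⟩|², one has the exact equality Σ_{m=1}^{d+1} Σ_{i=1}^{d} p_m(i)² = 2; equivalently, the average fidelity-based disturbance satisfies (1/(d+1)) Σ_{m=1}^{d+1} (1 − Σ_i p_m(i)²) = (1 − 1/(d+1))(1 − 1/d) exactly. -/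
/-!
Write `P_q = |u_q⟩⟨u_q|` for the `d(d+1)` basis vectors `u_q` and let `S` be the swap on
`ℂ^d ⊗ ℂ^d`. Mutual unbiasedness fixes the frame potential `∑_{q,r} |⟨u_q, u_r⟩|⁴ = 2d(d+1)`,
and this is exactly what makes the Hilbert–Schmidt norm of `∑_q P_q ⊗ P_q - (1 + S)` vanish.
Hence `∑_q P_q ⊗ P_q = 1 + S` (the bases form a 2-design), and evaluating both sides on
`ψ ⊗ ψ` gives `∑_q |⟨u_q, ψ⟩|⁴ = ⟨ψ ⊗ ψ, (1 + S) ψ ⊗ ψ⟩ = 2`.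
-/

open Matrix
open scoped ComplexOrder

variable {𝕜 n ι : Type*} [RCLike 𝕜]

section FrameOperator

variable [Fintype ι]

def frameOperator (u : ι → n → 𝕜) : Matrix n n 𝕜 :=
  ∑ q, vecMulVec (u q) (star (u q))

lemma isHermitian_frameOperator (u : ι → n → 𝕜) : (frameOperator u).IsHermitian := by
  simp [IsHermitian, frameOperator, conjTranspose_sum, conjTranspose_vecMulVec]

variable [Fintype n]

lemma star_dotProduct_frameOperator_mulVec (u : ι → n → 𝕜) (w : n → 𝕜) :
    star w ⬝ᵥ frameOperator u *ᵥ w = ((∑ q, ‖star (u q) ⬝ᵥ w‖ ^ 2 : ℝ) : 𝕜) := by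
  simp only [frameOperator, sum_mulVec, dotProduct_sum, vecMulVec_mulVec, RCLike.ofReal_sum,
    RCLike.ofReal_pow]
  refine Finset.sum_congr rfl fun q _ => ?_
  rw [← RCLike.mul_conj, dotProduct_smul, MulOpposite.smul_eq_mul_unop, MulOpposite.unop_op,
    star_dotProduct, mul_comm]
  rfl

lemma trace_frameOperator_mul (u : ι → n → 𝕜) (X : Matrix n n 𝕜) :
    trace (frameOperator u * X) = ∑ q, star (u q) ⬝ᵥ X *ᵥ u q := by
  simp only [frameOperator, Finset.sum_mul, trace_sum, vecMulVec_mul, trace_vecMulVec]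
  exact Finset.sum_congr rfl fun q _ => by rw [dotProduct_comm, dotProduct_mulVec]

/-- The hypotheses say `tr(F²) = tr(FA) = tr(A²)` for `F = frameOperator u`, so the
Hilbert–Schmidt norm of `F - A` vanishes. -/
lemma frameOperator_eq_of_trace_eq {u : ι → n → 𝕜} {A : Matrix n n 𝕜} (hA : A.IsHermitian)
    {c : ℝ} (hgram : ∑ q, ∑ r, ‖star (u q) ⬝ᵥ u r‖ ^ 2 = c)
    (hdiag : ∑ q, star (u q) ⬝ᵥ A *ᵥ u q = c) (htr : trace (A * A) = c) :
    frameOperator u = A := by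
  have hFF : trace (frameOperator u * frameOperator u) = c := by
    simp_rw [trace_frameOperator_mul, star_dotProduct_frameOperator_mulVec]
    rw [← RCLike.ofReal_sum, Finset.sum_comm, hgram]
  have hFA : trace (frameOperator u * A) = c := by rw [trace_frameOperator_mul, hdiag]
  rw [← sub_eq_zero, ← trace_conjTranspose_mul_self_eq_zero_iff, conjTranspose_sub,
    (isHermitian_frameOperator u).eq, hA.eq]
  simp only [sub_mul, mul_sub, trace_sub, hFF, hFA, htr, trace_mul_comm A]
  ring

def framePotential (u : ι → n → 𝕜) : ℝ :=
  ∑ q, ∑ r, ‖star (u q) ⬝ᵥ u r‖ ^ 4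

end FrameOperator

section TensorSquare

def tensorSquare (v : n → 𝕜) : n × n → 𝕜 := fun x => v x.1 * v x.2

lemma star_tensorSquare_dotProduct [Fintype n] (v w : n → 𝕜) :
    star (tensorSquare v) ⬝ᵥ tensorSquare w = (star v ⬝ᵥ w) ^ 2 := by
  simp only [dotProduct, tensorSquare, Pi.star_apply, star_mul', Fintype.sum_prod_type, sq,
    Finset.sum_mul_sum]
  exact Finset.sum_congr rfl fun a _ => Finset.sum_congr rfl fun b _ => by ring

variable [DecidableEq n]

variable (𝕜 n) in
def swapMatrix : Matrix (n × n) (n × n) 𝕜 :=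
  Equiv.Perm.permMatrix 𝕜 (Equiv.prodComm n n : Equiv.Perm (n × n))

lemma isHermitian_one_add_swapMatrix : (1 + swapMatrix 𝕜 n).IsHermitian := by
  rw [IsHermitian, conjTranspose_add, conjTranspose_one, swapMatrix, conjTranspose_permMatrix]
  rfl

variable [Fintype n]

lemma swapMatrix_mul_self : swapMatrix 𝕜 n * swapMatrix 𝕜 n = 1 := by
  have hinvol : (Equiv.prodComm n n : Equiv.Perm (n × n)) * Equiv.prodComm n n = 1 :=
    Equiv.ext fun _ => rfl
  rw [swapMatrix, ← permMatrix_mul, hinvol, permMatrix_one]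

lemma trace_swapMatrix : trace (swapMatrix 𝕜 n) = Fintype.card n := by
  rw [trace, Fintype.sum_prod_type]
  simp [swapMatrix, PEquiv.toMatrix_apply, Prod.ext_iff, eq_comm]

lemma trace_one_add_swapMatrix_mul_self :
    trace ((1 + swapMatrix 𝕜 n) * (1 + swapMatrix 𝕜 n)) =
      (2 * Fintype.card n * (Fintype.card n + 1) : 𝕜) := by
  simp only [add_mul, mul_add, one_mul, mul_one, swapMatrix_mul_self, trace_add, trace_one,
    trace_swapMatrix, Fintype.card_prod]
  push_cast
  ring

lemma one_add_swapMatrix_mulVec_tensorSquare (v : n → 𝕜) :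
    (1 + swapMatrix 𝕜 n) *ᵥ tensorSquare v = 2 • tensorSquare v := by
  have hswap : swapMatrix 𝕜 n *ᵥ tensorSquare v = tensorSquare v := by
    ext x
    simp [swapMatrix, permMatrix_mulVec, tensorSquare, mul_comm]
  rw [add_mulVec, one_mulVec, hswap, two_nsmul]

lemma star_tensorSquare_dotProduct_one_add_swapMatrix_mulVec (v : n → 𝕜) :
    star (tensorSquare v) ⬝ᵥ (1 + swapMatrix 𝕜 n) *ᵥ tensorSquare v = 2 * (star v ⬝ᵥ v) ^ 2 := by
  rw [one_add_swapMatrix_mulVec_tensorSquare, dotProduct_smul, star_tensorSquare_dotProduct,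
    nsmul_eq_mul, Nat.cast_ofNat]

lemma sum_norm_dotProduct_pow_four_of_framePotential_eq [Fintype ι] {u : ι → n → 𝕜}
    (hunit : ∀ q, star (u q) ⬝ᵥ u q = 1)
    (hcard : Fintype.card ι = Fintype.card n * (Fintype.card n + 1))
    (hpot : framePotential u = 2 * Fintype.card n * (Fintype.card n + 1))
    (ψ : n → 𝕜) :
    ∑ q, ‖star (u q) ⬝ᵥ ψ‖ ^ 4 = 2 * ‖star ψ ⬝ᵥ ψ‖ ^ 2 := by
  have hnorm_sq (v w : n → 𝕜) :
      ‖star (tensorSquare v) ⬝ᵥ tensorSquare w‖ ^ 2 = ‖star v ⬝ᵥ w‖ ^ 4 := by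
    rw [star_tensorSquare_dotProduct, norm_pow, ← pow_mul]
  have hdesign : frameOperator (fun q => tensorSquare (u q)) = 1 + swapMatrix 𝕜 n := by
    refine frameOperator_eq_of_trace_eq isHermitian_one_add_swapMatrix
      (c := 2 * Fintype.card n * (Fintype.card n + 1)) ?_ ?_ ?_
    · simpa only [hnorm_sq, framePotential] using hpot
    · simp only [star_tensorSquare_dotProduct_one_add_swapMatrix_mulVec, hunit, Finset.sum_const,
        Finset.card_univ, hcard]
      push_cast
      ring
    · rw [trace_one_add_swapMatrix_mul_self]
      push_cast
      ring
  have hψ := star_dotProduct_frameOperator_mulVec (fun q => tensorSquare (u q)) (tensorSquare ψ)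
  rw [hdesign, star_tensorSquare_dotProduct_one_add_swapMatrix_mulVec] at hψ
  have hnorm := congrArg norm hψ
  rw [RCLike.norm_ofReal, abs_of_nonneg (by positivity), norm_mul, norm_pow, RCLike.norm_two]
    at hnorm
  simpa only [hnorm_sq] using hnorm.symm

end TensorSquare

section MutuallyUnbiased

variable [Fintype n] [DecidableEq n] [Fintype ι] [DecidableEq ι] {B : ι → n → n → 𝕜}

lemma sum_norm_dotProduct_pow_four_of_mutuallyUnbiased
    (hortho : ∀ m i j, star (B m i) ⬝ᵥ B m j = if i = j then (1 : 𝕜) else 0)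
    (hmub : ∀ m m', m ≠ m' → ∀ i j, ‖star (B m i) ⬝ᵥ B m' j‖ ^ 2 = 1 / (Fintype.card n : ℝ))
    (m : ι) (i : n) :
    ∑ r : ι × n, ‖star (B m i) ⬝ᵥ B r.1 r.2‖ ^ 4 =
      1 + ((Fintype.card ι : ℝ) - 1) / Fintype.card n := by
  have hsame : ∑ j, ‖star (B m i) ⬝ᵥ B m j‖ ^ 4 = 1 := by
    simp [hortho, apply_ite]
  have hother : ∀ m' ∈ ({m}ᶜ : Finset ι),
      ∑ j, ‖star (B m i) ⬝ᵥ B m' j‖ ^ 4 = 1 / Fintype.card n := by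
    intro m' hm'
    have hne : m ≠ m' := by simpa [eq_comm] using hm'
    have hn : (Fintype.card n : ℝ) ≠ 0 := Nat.cast_ne_zero.2 (Fintype.card_pos_iff.2 ⟨i⟩).ne'
    simp_rw [show (4 : ℕ) = 2 * 2 from rfl, pow_mul, hmub m m' hne, Finset.sum_const,
      Finset.card_univ, nsmul_eq_mul]
    field_simp
  rw [Fintype.sum_prod_type, Fintype.sum_eq_add_sum_compl m, hsame, Finset.sum_congr rfl hother,
    Finset.sum_const, Finset.card_compl, Finset.card_singleton, nsmul_eq_mul,
    Nat.cast_sub (Fintype.card_pos_iff.2 ⟨m⟩)]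
  ring

lemma framePotential_eq_of_complete_mutuallyUnbiased
    (hortho : ∀ m i j, star (B m i) ⬝ᵥ B m j = if i = j then (1 : 𝕜) else 0)
    (hmub : ∀ m m', m ≠ m' → ∀ i j, ‖star (B m i) ⬝ᵥ B m' j‖ ^ 2 = 1 / (Fintype.card n : ℝ))
    (hcomplete : Fintype.card ι = Fintype.card n + 1) :
    framePotential (fun q : ι × n => B q.1 q.2) = 2 * Fintype.card n * (Fintype.card n + 1) := by
  have hrow (q : ι × n) : ∑ r : ι × n, ‖star (B q.1 q.2) ⬝ᵥ B r.1 r.2‖ ^ 4 = 2 := by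
    have hn : (Fintype.card n : ℝ) ≠ 0 := Nat.cast_ne_zero.2 (Fintype.card_pos_iff.2 ⟨q.2⟩).ne'
    rw [sum_norm_dotProduct_pow_four_of_mutuallyUnbiased hortho hmub, hcomplete]
    field_simp
    push_cast
    ring
  rw [framePotential, Finset.sum_congr rfl fun q _ => hrow q, Finset.sum_const, Finset.card_univ,
    Fintype.card_prod, hcomplete, nsmul_eq_mul]
  push_cast
  ring

end MutuallyUnbiased

/-- For a complete set of `d+1` pairwise mutually unbiased orthonormal
bases of `ℂ^d` and any unit vector `ψ`, with `p_m(i) = |⟨i_m, ψ⟩|²`, one has the exact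
equality `∑_{m=1}^{d+1} ∑_i p_m(i)² = 2`; equivalently, the average fidelity-based
disturbance equals `(1 - 1/(d+1))(1 - 1/d)` exactly. -/
theorem disturbance_equality_complete_mubs {d : ℕ}
    (B : Fin (d + 1) → Fin d → (Fin d → ℂ))
    (hortho : ∀ m, ∀ i j, star (B m i) ⬝ᵥ B m j = if i = j then (1 : ℂ) else 0)
    (hmub : ∀ m n, m ≠ n → ∀ i j,
      ‖star (B m i) ⬝ᵥ B n j‖ ^ 2 = 1 / (d : ℝ))
    (ψ : Fin d → ℂ) (hψ : star ψ ⬝ᵥ ψ = 1) :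
    ∑ m, ∑ i, (‖star (B m i) ⬝ᵥ ψ‖ ^ 2) ^ 2 = 2 ∧
    (1 / ((d : ℝ) + 1)) * ∑ m, (1 - ∑ i, (‖star (B m i) ⬝ᵥ ψ‖ ^ 2) ^ 2)
      = (1 - 1 / ((d : ℝ) + 1)) * (1 - 1 / (d : ℝ)) := by
  have hd : (d : ℝ) ≠ 0 := by
    rintro hd
    obtain rfl : d = 0 := by exact_mod_cast hd
    simp [dotProduct] at hψ
  have hpot := framePotential_eq_of_complete_mutuallyUnbiased hortho
    (by simpa only [Fintype.card_fin] using hmub) (by simp only [Fintype.card_fin])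
  have hcard : Fintype.card (Fin (d + 1) × Fin d) =
      Fintype.card (Fin d) * (Fintype.card (Fin d) + 1) := by
    simp only [Fintype.card_prod, Fintype.card_fin, mul_comm]
  have hdesign := sum_norm_dotProduct_pow_four_of_framePotential_eq
    (fun q => by rw [hortho, if_pos rfl]) hcard hpot ψ
  rw [hψ, norm_one, one_pow, mul_one] at hdesign
  have hsum : ∑ m, ∑ i, (‖star (B m i) ⬝ᵥ ψ‖ ^ 2) ^ 2 = 2 := by
    simpa only [← pow_mul, Nat.reduceMul, ← Fintype.sum_prod_type'] using hdesign
  refine ⟨hsum, ?_⟩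
  rw [Finset.sum_sub_distrib, hsum, Finset.sum_const, Finset.card_univ, Fintype.card_fin]
  field_simp
  ring
end

section
/- Let A_1, …, A_N (N ≥ 1) be self-adjoint operators on a finite-dimensional complex Hilbert space satisfying A_i² = I for every i and A_j A_k + A_k A_j = 0 for all j ≠ k. For a unit vector ψ, let P_i^± = (I ± A_i)/2 be the spectral projections of A_i and p_i^± = ⟨ψ, P_i^± ψ⟩ the outcome probabilities. Then the average fidelity-based disturbance satisfies (1/N) Σ_{i=1}^{N} (1 − (p_i^+)² − (p_i^-)²) ≥ (1/2)(1 − 1/N). -/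
/-!
Write `aᵢ = Re ⟨ψ, Aᵢ ψ⟩`. As `⟨ψ, ψ⟩ = 1`, the `i`-th disturbance equals `(1 - aᵢ²) / 2`, so the
claim reduces to `∑ aᵢ² ≤ 1`. The anticommutation relations make `B = ∑ aᵢ Aᵢ` square to
`(∑ aᵢ²) • 1`, while `Re ⟨ψ, B ψ⟩ = ∑ aᵢ²`. Cauchy–Schwarz for the self-adjoint `B` then gives
`(∑ aᵢ²)² ≤ ⟨B ψ, B ψ⟩ = ∑ aᵢ²`.
-/

open Matrix

section Clifford

variable {K R ι : Type*} [CommSemiring K] [Ring R] [Algebra K R]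

theorem sum_smul_mul_add_mul_sum_smul_eq_zero (s : Finset ι) (A : ι → R) (c : ι → K) {X : R}
    (hanti : ∀ i ∈ s, A i * X + X * A i = 0) :
    (∑ i ∈ s, c i • A i) * X + X * ∑ i ∈ s, c i • A i = 0 := by
  simp only [Finset.sum_mul, Finset.mul_sum, smul_mul_assoc, mul_smul_comm,
    ← Finset.sum_add_distrib, ← smul_add]
  exact Finset.sum_eq_zero fun i hi => by rw [hanti i hi, smul_zero]

theorem sum_smul_mul_self_of_anticommute (s : Finset ι) (A : ι → R) (c : ι → K)
    (hsq : ∀ i, A i * A i = 1) (hanti : ∀ j k, j ≠ k → A j * A k + A k * A j = 0) :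
    (∑ i ∈ s, c i • A i) * (∑ i ∈ s, c i • A i) = (∑ i ∈ s, c i ^ 2) • (1 : R) := by
  classical
  induction s using Finset.induction_on with
  | empty => simp
  | insert a s has ih =>
    set S := ∑ i ∈ s, c i • A i
    have hcross : (c a • A a) * S + S * (c a • A a) = 0 := by
      rw [smul_mul_assoc, mul_smul_comm, ← smul_add, add_comm,
        sum_smul_mul_add_mul_sum_smul_eq_zero s A c fun i hi =>
          hanti i a (ne_of_mem_of_not_mem hi has), smul_zero]
    rw [Finset.sum_insert has, Finset.sum_insert has]
    calc (c a • A a + S) * (c a • A a + S)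
        = (c a • A a) * (c a • A a) + ((c a • A a) * S + S * (c a • A a)) + S * S := by
          simp only [add_mul, mul_add]; abel
      _ = (c a ^ 2 + ∑ i ∈ s, c i ^ 2) • (1 : R) := by
          rw [hcross, ih, smul_mul_smul_comm, hsq, add_zero, add_smul, sq]

end Clifford

section Expectation

variable {m : Type*} [Fintype m]

theorem sq_re_star_dotProduct_le (v w : m → ℂ) :
    (star v ⬝ᵥ w).re ^ 2 ≤ (star v ⬝ᵥ v).re * (star w ⬝ᵥ w).re := by
  have hcs := inner_mul_inner_self_le (𝕜 := ℂ) (WithLp.toLp 2 v) (WithLp.toLp 2 w)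
  rw [norm_inner_symm (WithLp.toLp 2 w)] at hcs
  simp only [EuclideanSpace.inner_toLp_toLp, dotProduct_comm _ (star _)] at hcs
  calc (star v ⬝ᵥ w).re ^ 2 ≤ ‖star v ⬝ᵥ w‖ ^ 2 :=
        sq_le_sq' (neg_le_of_abs_le (Complex.abs_re_le_norm _)) (Complex.re_le_norm _)
    _ ≤ _ := by rw [sq]; exact hcs

theorem sq_re_star_dotProduct_mulVec_le (B : Matrix m m ℂ) (ψ : m → ℂ) :
    (star ψ ⬝ᵥ B *ᵥ ψ).re ^ 2 ≤ (star ψ ⬝ᵥ ψ).re * (star ψ ⬝ᵥ (Bᴴ * B) *ᵥ ψ).re := by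
  have hnorm : star (B *ᵥ ψ) ⬝ᵥ B *ᵥ ψ = star ψ ⬝ᵥ (Bᴴ * B) *ᵥ ψ := by
    rw [star_mulVec, ← dotProduct_mulVec, mulVec_mulVec]
  rw [← hnorm]
  exact sq_re_star_dotProduct_le ψ (B *ᵥ ψ)

variable [DecidableEq m]

theorem star_dotProduct_half_smul_one_add_mulVec (A : Matrix m m ℂ) {ψ : m → ℂ}
    (hψ : star ψ ⬝ᵥ ψ = 1) :
    star ψ ⬝ᵥ ((2 : ℂ)⁻¹ • (1 + A)) *ᵥ ψ = (1 + star ψ ⬝ᵥ A *ᵥ ψ) / 2 := by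
  rw [smul_mulVec, add_mulVec, one_mulVec, dotProduct_smul, dotProduct_add, hψ, smul_eq_mul,
    inv_mul_eq_div]

theorem star_dotProduct_half_smul_one_sub_mulVec (A : Matrix m m ℂ) {ψ : m → ℂ}
    (hψ : star ψ ⬝ᵥ ψ = 1) :
    star ψ ⬝ᵥ ((2 : ℂ)⁻¹ • (1 - A)) *ᵥ ψ = (1 - star ψ ⬝ᵥ A *ᵥ ψ) / 2 := by
  rw [smul_mulVec, sub_mulVec, one_mulVec, dotProduct_smul, dotProduct_sub, hψ, smul_eq_mul,
    inv_mul_eq_div]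

theorem sum_sq_re_star_dotProduct_mulVec_le_one {ι : Type*} [Fintype ι]
    (A : ι → Matrix m m ℂ) (hherm : ∀ i, (A i).IsHermitian) (hsq : ∀ i, A i * A i = 1)
    (hanti : ∀ j k, j ≠ k → A j * A k + A k * A j = 0) (ψ : m → ℂ) (hψ : star ψ ⬝ᵥ ψ = 1) :
    ∑ i, (star ψ ⬝ᵥ A i *ᵥ ψ).re ^ 2 ≤ 1 := by
  set a : ι → ℝ := fun i => (star ψ ⬝ᵥ A i *ᵥ ψ).re
  set B : Matrix m m ℂ := ∑ i, a i • A i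
  have hB : (star ψ ⬝ᵥ B *ᵥ ψ).re = ∑ i, a i ^ 2 := by
    simp only [B, sum_mulVec, dotProduct_sum, smul_mulVec, dotProduct_smul, Complex.re_sum,
      Complex.smul_re, smul_eq_mul, sq, a]
  have hBB : Bᴴ * B = (∑ i, a i ^ 2) • 1 := by
    rw [(isHermitian_iff_isSelfAdjoint.mpr (isSelfAdjoint_sum _ fun i _ =>
      ((hherm i).smul (IsSelfAdjoint.all (a i))))).eq]
    exact sum_smul_mul_self_of_anticommute _ A a hsq hanti
  have hcs := sq_re_star_dotProduct_mulVec_le B ψ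
  rw [hB, hBB, smul_mulVec, one_mulVec, dotProduct_smul, hψ, Complex.one_re, one_mul,
    Complex.smul_re, Complex.one_re, smul_eq_mul, mul_one] at hcs
  nlinarith [Finset.sum_nonneg fun i (_ : i ∈ Finset.univ) => sq_nonneg (a i)]

end Expectation

/-- For `N ≥ 1` pairwise anticommuting dichotomic observables
`A i` (self-adjoint, `Aᵢ² = I`, anticommuting for distinct indices) on a
finite-dimensional complex Hilbert space, any unit vector `ψ`, and outcome
probabilities `pᵢ± = ⟨ψ, (I ± A i)/2 ψ⟩`, the average fidelity-based disturbance
satisfies `(1/N) ∑ i (1 - (pᵢ⁺)² - (pᵢ⁻)²) ≥ (1/2)(1 - 1/N)`. -/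
theorem anticommuting_disturbance_tradeoff {n N : ℕ} (hN : 1 ≤ N)
    (A : Fin N → Matrix (Fin n) (Fin n) ℂ)
    (hherm : ∀ i, (A i).IsHermitian)
    (hsq : ∀ i, A i * A i = 1)
    (hanti : ∀ j k, j ≠ k → A j * A k + A k * A j = 0)
    (ψ : Fin n → ℂ) (hψ : star ψ ⬝ᵥ ψ = 1) :
    (1 / (N : ℝ)) * ∑ i,
        (1 - ((star ψ ⬝ᵥ (((2 : ℂ)⁻¹) • (1 + A i)) *ᵥ ψ).re) ^ 2
           - ((star ψ ⬝ᵥ (((2 : ℂ)⁻¹) • (1 - A i)) *ᵥ ψ).re) ^ 2)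
      ≥ (1 / 2) * (1 - 1 / (N : ℝ)) := by
  have hbound := sum_sq_re_star_dotProduct_mulVec_le_one A hherm hsq hanti ψ hψ
  simp only [star_dotProduct_half_smul_one_add_mulVec _ hψ,
    star_dotProduct_half_smul_one_sub_mulVec _ hψ]
  have hterm (z : ℂ) : 1 - ((1 + z) / 2).re ^ 2 - ((1 - z) / 2).re ^ 2 = (1 - z.re ^ 2) / 2 := by
    simp only [Complex.div_ofNat_re, Complex.add_re, Complex.sub_re, Complex.one_re]
    ring
  simp only [hterm, ← Finset.sum_div, Finset.sum_sub_distrib, Finset.sum_const, Finset.card_univ,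
    Fintype.card_fin, nsmul_eq_mul, mul_one]
  have hNpos : (0 : ℝ) < N := by exact_mod_cast hN
  rw [ge_iff_le, ← sub_nonneg]
  field_simp
  linarith
end

section
/- Let A_1, …, A_N be self-adjoint operators on a finite-dimensional complex Hilbert space satisfying A_i² = I for every i and A_j A_k + A_k A_j = 0 for all j ≠ k. For a unit vector ψ, let p_i^± = ⟨ψ, (I ± A_i)/2 · ψ⟩ be the probabilities of the outcomes ±1 when measuring A_i on ψ. Then Σ_{i=1}^{N} ((p_i^+)² + (p_i^-)²) ≤ (N + 1)/2. -/
open Matrix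

/-- For pairwise anticommuting dichotomic observables `A i`
(self-adjoint, `Aᵢ² = I`, anticommuting for distinct indices) on a finite-dimensional
complex Hilbert space, any unit vector `ψ`, and outcome probabilities
`pᵢ± = ⟨ψ, (I ± A i)/2 ψ⟩`, one has `∑ i ((pᵢ⁺)² + (pᵢ⁻)²) ≤ (N + 1)/2`. -/
theorem anticommuting_probability_bound {n N : ℕ}
    (A : Fin N → Matrix (Fin n) (Fin n) ℂ)
    (hherm : ∀ i, (A i).IsHermitian)
    (hsq : ∀ i, A i * A i = 1)
    (hanti : ∀ j k, j ≠ k → A j * A k + A k * A j = 0)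
    (ψ : Fin n → ℂ) (hψ : star ψ ⬝ᵥ ψ = 1) :
    ∑ i, (((star ψ ⬝ᵥ (((2 : ℂ)⁻¹) • (1 + A i)) *ᵥ ψ).re) ^ 2
        + ((star ψ ⬝ᵥ (((2 : ℂ)⁻¹) • (1 - A i)) *ᵥ ψ).re) ^ 2)
      ≤ ((N : ℝ) + 1) / 2 := by
  set t : Fin N → ℝ := fun i => (star ψ ⬝ᵥ (A i) *ᵥ ψ).re with ht
  have hc : ∀ i, star ψ ⬝ᵥ (A i) *ᵥ ψ = (t i : ℂ) := by
    intro i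
    have hstar : star (star ψ ⬝ᵥ (A i) *ᵥ ψ) = star ψ ⬝ᵥ (A i) *ᵥ ψ := by
      rw [← star_dotProduct_star, star_star, star_mulVec, (hherm i).eq,
        dotProduct_mulVec]
    have him : (star ψ ⬝ᵥ (A i) *ᵥ ψ).im = 0 := by
      have := congrArg Complex.im hstar
      simp only [Complex.star_def, Complex.conj_im] at this
      linarith
    exact Complex.ext (by simp [ht]) (by simp [him])
  set s : ℝ := ∑ i, t i ^ 2 with hs
  set B : Matrix (Fin n) (Fin n) ℂ := ∑ i, (t i : ℂ) • A i with hB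
  have hBH : Bᴴ = B := by
    simp only [hB, conjTranspose_sum, conjTranspose_smul]
    refine Finset.sum_congr rfl fun i _ => ?_
    rw [(hherm i).eq, Complex.star_def, Complex.conj_ofReal]
  have hsumv : ∀ (M : Fin N → Matrix (Fin n) (Fin n) ℂ) (x : Fin n → ℂ),
      (∑ i, M i) *ᵥ x = ∑ i, M i *ᵥ x := by
    intro M x
    ext j
    simp only [mulVec, dotProduct, Matrix.sum_apply, Finset.sum_apply, Finset.sum_mul]
    rw [Finset.sum_comm]
  have hdsum : ∀ (f : Fin N → Fin n → ℂ), star ψ ⬝ᵥ (∑ i, f i) = ∑ i, star ψ ⬝ᵥ f i := by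
    intro f
    simp only [dotProduct, Finset.sum_apply, Finset.mul_sum]
    rw [Finset.sum_comm]
  have hBψ : star ψ ⬝ᵥ B *ᵥ ψ = (s : ℂ) := by
    rw [hB, hsumv, hdsum]
    simp only [smul_mulVec, dotProduct_smul, hc, smul_eq_mul, hs]
    push_cast
    exact Finset.sum_congr rfl fun i _ => by ring
  have hB2 : B * B + B * B = ((2 * s : ℝ) : ℂ) • 1 := by
    have expand : B * B = ∑ j, ∑ k, ((t j : ℂ) * t k) • (A j * A k) := by
      rw [hB, Finset.sum_mul_sum]
      refine Finset.sum_congr rfl fun j _ => Finset.sum_congr rfl fun k _ => ?_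
      rw [smul_mul_smul_comm]
    have expand' : B * B = ∑ j, ∑ k, ((t j : ℂ) * t k) • (A k * A j) := by
      rw [expand, Finset.sum_comm]
      refine Finset.sum_congr rfl fun j _ => Finset.sum_congr rfl fun k _ => ?_
      rw [mul_comm ((t k : ℂ)) (t j)]
    calc B * B + B * B = ∑ j, ∑ k, ((t j : ℂ) * t k) • (A j * A k + A k * A j) := by
          nth_rewrite 2 [expand']
          rw [expand]
          rw [← Finset.sum_add_distrib]
          refine Finset.sum_congr rfl fun j _ => ?_
          rw [← Finset.sum_add_distrib]
          refine Finset.sum_congr rfl fun k _ => ?_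
          rw [smul_add]
      _ = ∑ j, ((t j : ℂ) * t j) • ((2 : ℂ) • (1 : Matrix (Fin n) (Fin n) ℂ)) := by
          refine Finset.sum_congr rfl fun j _ => ?_
          rw [Finset.sum_eq_single j]
          · rw [hsq j]; norm_num [two_smul]
          · intro k _ hk
            rw [hanti j k (Ne.symm hk), smul_zero]
          · intro h; exact absurd (Finset.mem_univ j) h
      _ = ((2 * s : ℝ) : ℂ) • 1 := by
          simp only [smul_smul]
          rw [← Finset.sum_smul]
          congr 1
          rw [hs]
          push_cast
          rw [Finset.mul_sum]
          exact Finset.sum_congr rfl fun j _ => by ring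
  -- v = B ψ - s ψ
  set v : Fin n → ℂ := B *ᵥ ψ - (s : ℂ) • ψ with hv
  have hBBψ : star ψ ⬝ᵥ (B * B) *ᵥ ψ = (s : ℂ) := by
    have h2 : ((2 : ℂ)) * (star ψ ⬝ᵥ (B * B) *ᵥ ψ) = 2 * ((s : ℝ) : ℂ) := by
      have := congrArg (fun M => star ψ ⬝ᵥ M *ᵥ ψ) hB2
      simp only [add_mulVec, dotProduct_add, smul_mulVec, one_mulVec,
        dotProduct_smul, hψ, smul_eq_mul, mul_one] at this
      push_cast at this
      linear_combination this
    exact mul_left_cancel₀ (two_ne_zero' ℂ) h2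
  have hstarBψ : star (B *ᵥ ψ) ⬝ᵥ (B *ᵥ ψ) = (s : ℂ) := by
    rw [star_mulVec, hBH, ← dotProduct_mulVec, mulVec_mulVec, hBBψ]
  have hBψψ : star (B *ᵥ ψ) ⬝ᵥ ψ = (s : ℂ) := by
    rw [star_mulVec, hBH, ← dotProduct_mulVec, hBψ]
  have hvv : star v ⬝ᵥ v = ((s - s ^ 2 : ℝ) : ℂ) := by
    simp only [hv, star_sub, star_smul, sub_dotProduct, dotProduct_sub,
      smul_dotProduct, dotProduct_smul, hstarBψ, hBψψ, hBψ, hψ,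
      smul_eq_mul, mul_one, Complex.star_def, Complex.conj_ofReal]
    push_cast
    ring
  have hvpos : 0 ≤ (star v ⬝ᵥ v).re := by
    rw [dotProduct, Complex.re_sum]
    refine Finset.sum_nonneg fun i _ => ?_
    rw [Pi.star_apply, Complex.star_def, ← Complex.normSq_eq_conj_mul_self,
      Complex.ofReal_re]
    exact Complex.normSq_nonneg _
  have hsle : s - s ^ 2 ≥ 0 := by
    rw [hvv, Complex.ofReal_re] at hvpos
    linarith
  have hs0 : 0 ≤ s := Finset.sum_nonneg fun i _ => sq_nonneg _
  have hs1 : s ≤ 1 := by nlinarith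
  -- compute each term
  have hterm : ∀ i,
      ((star ψ ⬝ᵥ (((2 : ℂ)⁻¹) • (1 + A i)) *ᵥ ψ).re) = (1 + t i) / 2 ∧
      ((star ψ ⬝ᵥ (((2 : ℂ)⁻¹) • (1 - A i)) *ᵥ ψ).re) = (1 - t i) / 2 := by
    intro i
    constructor
    · rw [smul_mulVec, dotProduct_smul, add_mulVec, one_mulVec,
        dotProduct_add, hψ, hc i]
      have : (1 : ℂ) + (t i : ℂ) = ((1 + t i : ℝ) : ℂ) := by push_cast; ring
      rw [this, smul_eq_mul]
      have : (2 : ℂ)⁻¹ * ((1 + t i : ℝ) : ℂ) = (((1 + t i) / 2 : ℝ) : ℂ) := by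
        push_cast; ring
      rw [this, Complex.ofReal_re]
    · rw [smul_mulVec, dotProduct_smul, sub_mulVec, one_mulVec,
        dotProduct_sub, hψ, hc i]
      have : (1 : ℂ) - (t i : ℂ) = ((1 - t i : ℝ) : ℂ) := by push_cast; ring
      rw [this, smul_eq_mul]
      have : (2 : ℂ)⁻¹ * ((1 - t i : ℝ) : ℂ) = (((1 - t i) / 2 : ℝ) : ℂ) := by
        push_cast; ring
      rw [this, Complex.ofReal_re]
  have hsum : ∑ i, (((star ψ ⬝ᵥ (((2 : ℂ)⁻¹) • (1 + A i)) *ᵥ ψ).re) ^ 2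
        + ((star ψ ⬝ᵥ (((2 : ℂ)⁻¹) • (1 - A i)) *ᵥ ψ).re) ^ 2)
      = ((N : ℝ) + s) / 2 := by
    have : ∀ i ∈ Finset.univ, (((star ψ ⬝ᵥ (((2 : ℂ)⁻¹) • (1 + A i)) *ᵥ ψ).re) ^ 2
        + ((star ψ ⬝ᵥ (((2 : ℂ)⁻¹) • (1 - A i)) *ᵥ ψ).re) ^ 2)
        = 1 / 2 + t i ^ 2 / 2 := by
      intro i _
      rw [(hterm i).1, (hterm i).2]
      ring
    rw [Finset.sum_congr rfl this, Finset.sum_add_distrib, Finset.sum_const,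
      Finset.card_univ, Fintype.card_fin, ← Finset.sum_div, ← hs, nsmul_eq_mul]
    ring
  rw [hsum]
  linarith
end

section
/- Let (a_1, a_2) and (b_1, b_2) be two orthonormal bases of ℂ² (the eigenbases of two qubit observables A and B), and let c = max over i, j ∈ {1,2} of |⟨a_i, b_j⟩|. Then for every unit vector ψ ∈ ℂ², the average fidelity-based disturbance satisfies (1/2)[(1 − Σ_{i=1}^{2} |⟨a_i, ψ⟩|⁴) + (1 − Σ_{j=1}^{2} |⟨b_j, ψ⟩|⁴)] ≥ (1/2)(1 − c²). -/
/-!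
Write `p i = |⟨a i, ψ⟩|²`, `q j = |⟨b j, ψ⟩|²`, `x = |⟨a 0, b 0⟩|²` (so `|⟨a 0, b 1⟩|² = 1 - x`),
and `s = p 0 - p 1`, `t = q 0 - q 1`, `k = 2x - 1`. Expanding `ψ` in the basis `b` gives
`⟨a 0, ψ⟩ = ⟨a 0, b 0⟩⟨b 0, ψ⟩ + ⟨a 0, b 1⟩⟨b 1, ψ⟩`, and Cauchy–Schwarz on the interference term
of `|⟨a 0, ψ⟩|²` yields `(s - k t)² ≤ (1 - k²)(1 - t²)`: on the Bloch sphere, `s` and `t` are the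
projections of the Bloch vector of `ψ` on two unit vectors at angle `arccos k`. This ellipse lies
in the disc `s² + t² ≤ 1 + |k| ≤ 2c²`, and `∑ p i² = (1 + s²)/2`, `∑ q j² = (1 + t²)/2`.
-/

open Matrix

theorem sq_add_sq_le_one_add_abs {s t k : ℝ} (hk : |k| ≤ 1) (ht : t ^ 2 ≤ 1)
    (h : (s - k * t) ^ 2 ≤ (1 - k ^ 2) * (1 - t ^ 2)) : s ^ 2 + t ^ 2 ≤ 1 + |k| := by
  have hk2 : k ^ 2 = |k| ^ 2 := (sq_abs k).symm
  rcases hk.lt_or_eq with hk1 | hk1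
  · have hst : 2 * k * s * t ≤ |k| * (s ^ 2 + t ^ 2) := by
      rcases abs_cases k with ⟨hk', hk0⟩ | ⟨hk', hk0⟩ <;> rw [hk']
      · nlinarith [mul_nonneg hk0 (sq_nonneg (s - t))]
      · nlinarith [mul_nonneg (neg_nonneg.mpr hk0.le) (sq_nonneg (s + t))]
    nlinarith
  · have hs : s = k * t := by
      rw [hk1, one_pow] at hk2
      rw [hk2, sub_self, zero_mul] at h
      linarith [pow_eq_zero_iff two_ne_zero |>.mp (le_antisymm h (sq_nonneg _))]
    rw [hs, mul_pow, hk2, hk1]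
    linarith

theorem abs_norm_add_sq_sub_le {𝕜 E : Type*} [RCLike 𝕜] [NormedAddCommGroup E]
    [InnerProductSpace 𝕜 E] (x y : E) :
    |‖x + y‖ ^ 2 - ‖x‖ ^ 2 - ‖y‖ ^ 2| ≤ 2 * ‖x‖ * ‖y‖ := by
  have h := (RCLike.abs_re_le_norm (inner 𝕜 x y)).trans (norm_inner_le_norm x y)
  rw [@norm_add_sq 𝕜, abs_le]
  rw [abs_le] at h
  constructor <;> linarith [h.1, h.2]

theorem dotProduct_eq_sum_mul_of_orthonormal {R n : Type*} [CommRing R] [StarRing R]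
    [Fintype n] [DecidableEq n] {b : n → n → R}
    (hb : ∀ i j, star (b i) ⬝ᵥ b j = if i = j then 1 else 0) (u v : n → R) :
    star u ⬝ᵥ v = ∑ j, (star u ⬝ᵥ b j) * (star (b j) ⬝ᵥ v) := by
  set M : Matrix n n R := Matrix.of fun i => star (b i)
  have hM : M * Mᴴ = 1 := by
    ext i j
    simpa [M, Matrix.mul_apply, dotProduct, Matrix.one_apply] using hb i j
  -- A square matrix with orthonormal rows has orthonormal columns: `Mᴴ * M = 1` is completeness.
  calc star u ⬝ᵥ v = star u ⬝ᵥ (Mᴴ * M) *ᵥ v := by rw [mul_eq_one_comm.mp hM, one_mulVec]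
    _ = (star u ᵥ* Mᴴ) ⬝ᵥ (M *ᵥ v) := by rw [← mulVec_mulVec, dotProduct_mulVec]
    _ = _ := by
      congr 1 with j
      simp [M, dotProduct, vecMul]

theorem sum_norm_sq_eq_one_of_orthonormal {𝕜 n : Type*} [RCLike 𝕜] [Fintype n] [DecidableEq n]
    {b : n → n → 𝕜} (hb : ∀ i j, star (b i) ⬝ᵥ b j = if i = j then 1 else 0) {v : n → 𝕜}
    (hv : star v ⬝ᵥ v = 1) : ∑ j, ‖star (b j) ⬝ᵥ v‖ ^ 2 = 1 := by
  rw [← RCLike.ofReal_inj (K := 𝕜), RCLike.ofReal_one, ← hv,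
    dotProduct_eq_sum_mul_of_orthonormal hb]
  push_cast
  congr 1 with j
  rw [star_dotProduct v (b j)]
  exact (RCLike.conj_mul _).symm

theorem sum_pow_four_le_one_add_sq {p₀ p₁ q₀ q₁ u₀ u₁ c : ℝ} (hp : p₀ ^ 2 + p₁ ^ 2 = 1)
    (hq : q₀ ^ 2 + q₁ ^ 2 = 1) (hu : u₀ ^ 2 + u₁ ^ 2 = 1) (hc₀ : u₀ ^ 2 ≤ c ^ 2)
    (hc₁ : u₁ ^ 2 ≤ c ^ 2)
    (h : |p₀ ^ 2 - (u₀ * q₀) ^ 2 - (u₁ * q₁) ^ 2| ≤ 2 * (u₀ * q₀) * (u₁ * q₁)) :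
    p₀ ^ 4 + p₁ ^ 4 + (q₀ ^ 4 + q₁ ^ 4) ≤ 1 + c ^ 2 := by
  have hsq : ∀ x y : ℝ, x ^ 2 + y ^ 2 = 1 → x ^ 4 + y ^ 4 = (1 + (x ^ 2 - y ^ 2) ^ 2) / 2 :=
    fun x y hxy => by linear_combination (x ^ 2 + y ^ 2 + 1) / 2 * hxy
  have hk : |u₀ ^ 2 - u₁ ^ 2| ≤ 1 := abs_le.mpr ⟨by nlinarith, by nlinarith⟩
  have ht : (q₀ ^ 2 - q₁ ^ 2) ^ 2 ≤ 1 := by nlinarith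
  have hell : ((p₀ ^ 2 - p₁ ^ 2) - (u₀ ^ 2 - u₁ ^ 2) * (q₀ ^ 2 - q₁ ^ 2)) ^ 2
      ≤ (1 - (u₀ ^ 2 - u₁ ^ 2) ^ 2) * (1 - (q₀ ^ 2 - q₁ ^ 2) ^ 2) := by
    have h2 := pow_le_pow_left₀ (abs_nonneg _) h 2
    rw [sq_abs] at h2
    have e1 : (p₀ ^ 2 - p₁ ^ 2) - (u₀ ^ 2 - u₁ ^ 2) * (q₀ ^ 2 - q₁ ^ 2)
        = 2 * (p₀ ^ 2 - (u₀ * q₀) ^ 2 - (u₁ * q₁) ^ 2) := by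
      linear_combination (-1) * hp + (q₀ ^ 2 + q₁ ^ 2) * hu + hq
    have e2 : 1 - (u₀ ^ 2 - u₁ ^ 2) ^ 2 = 4 * u₀ ^ 2 * u₁ ^ 2 := by
      linear_combination (-(1 + u₀ ^ 2 + u₁ ^ 2)) * hu
    have e3 : 1 - (q₀ ^ 2 - q₁ ^ 2) ^ 2 = 4 * q₀ ^ 2 * q₁ ^ 2 := by
      linear_combination (-(1 + q₀ ^ 2 + q₁ ^ 2)) * hq
    rw [e1, e2, e3]
    linear_combination 4 * h2
  have hkc : |u₀ ^ 2 - u₁ ^ 2| ≤ 2 * c ^ 2 - 1 := abs_le.mpr ⟨by linarith, by linarith⟩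
  rw [hsq p₀ p₁ hp, hsq q₀ q₁ hq]
  linarith [sq_add_sq_le_one_add_abs hk ht hell]

/-- For two orthonormal bases `(a 1, a 2)` and `(b 1, b 2)` of `ℂ²`
with overlap constant `c = max_{i,j} |⟨a i, b j⟩|`, every unit vector `ψ` satisfies the
optimal disturbance tradeoff
`(1/2)[(1 - ∑ i |⟨a i, ψ⟩|⁴) + (1 - ∑ j |⟨b j, ψ⟩|⁴)] ≥ (1/2)(1 - c²)`. -/
theorem qubit_disturbance_tradeoff
    (a b : Fin 2 → (Fin 2 → ℂ))
    (ha : ∀ i j, star (a i) ⬝ᵥ a j = if i = j then (1 : ℂ) else 0)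
    (hb : ∀ i j, star (b i) ⬝ᵥ b j = if i = j then (1 : ℂ) else 0)
    (c : ℝ)
    (hc : IsGreatest {x : ℝ | ∃ i j, x = ‖star (a i) ⬝ᵥ b j‖} c)
    (ψ : Fin 2 → ℂ) (hψ : star ψ ⬝ᵥ ψ = 1) :
    (1 / 2) * ((1 - ∑ i, ‖star (a i) ⬝ᵥ ψ‖ ^ 4)
        + (1 - ∑ j, ‖star (b j) ⬝ᵥ ψ‖ ^ 4))
      ≥ (1 / 2) * (1 - c ^ 2) := by
  have hψa := sum_norm_sq_eq_one_of_orthonormal ha hψ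
  have hψb := sum_norm_sq_eq_one_of_orthonormal hb hψ
  rw [Fin.sum_univ_two] at hψa hψb
  have hab : ‖star (a 0) ⬝ᵥ b 0‖ ^ 2 + ‖star (a 0) ⬝ᵥ b 1‖ ^ 2 = 1 := by
    rw [star_dotProduct (a 0), star_dotProduct (a 0), norm_star, norm_star,
      ← Fin.sum_univ_two (fun j => ‖star (b j) ⬝ᵥ a 0‖ ^ 2)]
    exact sum_norm_sq_eq_one_of_orthonormal hb (by simpa using ha 0 0)
  have hc_sq : ∀ j, ‖star (a 0) ⬝ᵥ b j‖ ^ 2 ≤ c ^ 2 := fun j =>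
    pow_le_pow_left₀ (norm_nonneg _) (hc.2 ⟨0, j, rfl⟩) 2
  have hcs := abs_norm_add_sq_sub_le (𝕜 := ℂ)
    ((star (a 0) ⬝ᵥ b 0) * (star (b 0) ⬝ᵥ ψ)) ((star (a 0) ⬝ᵥ b 1) * (star (b 1) ⬝ᵥ ψ))
  rw [← Fin.sum_univ_two (fun j => (star (a 0) ⬝ᵥ b j) * (star (b j) ⬝ᵥ ψ)),
    ← dotProduct_eq_sum_mul_of_orthonormal hb, norm_mul, norm_mul] at hcs
  have := sum_pow_four_le_one_add_sq hψa hψb hab (hc_sq 0) (hc_sq 1) hcs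
  simp only [Fin.sum_univ_two]
  linarith
end

section
/- For all real numbers α and θ, cos²(α) + cos²(θ − α) ≤ 1 + |cos θ|. Consequently, the function F_θ(α) = 1 − (1/2)[cos²(α) + cos²(θ − α)] satisfies F_θ(α) ≥ 1 − cos²(θ/2) for θ ∈ [0, π/2] and F_θ(α) ≥ 1 − sin²(θ/2) for θ ∈ [π/2, π]. -/
open Real

lemma key_id (α θ : ℝ) :
    Real.cos α ^ 2 + Real.cos (θ - α) ^ 2
      = 1 + Real.cos θ * Real.cos (θ - 2 * α) := by
  have h1 : θ = (θ - α) + α := by ring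
  have h2 : θ - 2 * α = (θ - α) - α := by ring
  rw [h1, h2] at *
  have hc1 := Real.cos_add (θ - α) α
  have hc2 := Real.cos_sub (θ - α) α
  have hs := Real.sin_sq_add_cos_sq α
  have hs2 := Real.sin_sq_add_cos_sq (θ - α)
  rw [show (θ - α) + α - α = θ - α by ring]
  rw [hc1, hc2]
  linear_combination Real.sin α ^ 2 * hs2 + (1 - Real.cos (θ - α) ^ 2) * hs

lemma key_bound (α θ : ℝ) :
    Real.cos α ^ 2 + Real.cos (θ - α) ^ 2 ≤ 1 + |Real.cos θ| := by
  rw [key_id]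
  have h1 : Real.cos θ * Real.cos (θ - 2 * α) ≤ |Real.cos θ| := by
    calc Real.cos θ * Real.cos (θ - 2 * α) ≤ |Real.cos θ * Real.cos (θ - 2 * α)| := le_abs_self _
    _ = |Real.cos θ| * |Real.cos (θ - 2 * α)| := abs_mul _ _
    _ ≤ |Real.cos θ| * 1 := by
        exact mul_le_mul_of_nonneg_left (Real.abs_cos_le_one _) (abs_nonneg _)
    _ = |Real.cos θ| := mul_one _
  linarith

/-- For all real `α, θ`: `cos²α + cos²(θ - α) ≤ 1 + |cos θ|`.
Consequently `F_θ(α) = 1 - (1/2)[cos²α + cos²(θ - α)]` satisfies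
`F_θ(α) ≥ 1 - cos²(θ/2)` for `θ ∈ [0, π/2]` and `F_θ(α) ≥ 1 - sin²(θ/2)` for
`θ ∈ [π/2, π]`. -/
theorem qubit_angle_minimization :
    (∀ α θ : ℝ, Real.cos α ^ 2 + Real.cos (θ - α) ^ 2 ≤ 1 + |Real.cos θ|) ∧
    (∀ α θ : ℝ, 0 ≤ θ → θ ≤ Real.pi / 2 →
      1 - (1 / 2) * (Real.cos α ^ 2 + Real.cos (θ - α) ^ 2)
        ≥ 1 - Real.cos (θ / 2) ^ 2) ∧
    (∀ α θ : ℝ, Real.pi / 2 ≤ θ → θ ≤ Real.pi →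
      1 - (1 / 2) * (Real.cos α ^ 2 + Real.cos (θ - α) ^ 2)
        ≥ 1 - Real.sin (θ / 2) ^ 2) := by
  refine ⟨key_bound, ?_, ?_⟩
  · intro α θ h0 h2
    have hb := key_bound α θ
    have hcos : 0 ≤ Real.cos θ := by
      apply Real.cos_nonneg_of_mem_Icc
      constructor <;> linarith [Real.pi_pos]
    rw [abs_of_nonneg hcos] at hb
    have hhalf : Real.cos (θ / 2) ^ 2 = (1 + Real.cos θ) / 2 := by
      have h := Real.cos_sq (θ / 2)
      rw [show 2 * (θ / 2) = θ by ring] at h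
      linarith
    rw [hhalf]; linarith
  · intro α θ h1 h2
    have hb := key_bound α θ
    have hcos : Real.cos θ ≤ 0 := by
      apply Real.cos_nonpos_of_pi_div_two_le_of_le h1
      linarith [Real.pi_pos]
    rw [abs_of_nonpos hcos] at hb
    have hhalf : Real.sin (θ / 2) ^ 2 = (1 - Real.cos θ) / 2 := by
      have h := Real.cos_sq (θ / 2)
      rw [show 2 * (θ / 2) = θ by ring] at h
      have h2 := Real.sin_sq_add_cos_sq (θ / 2)
      linarith
    rw [hhalf]; linarith
end
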